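/- In the polynomial ring ℚ[a,b,s,t] one has the identity 27·( 4·A(a,b,s,t)³ + 27·B(a,b,s,t)² ) = (4a³ + 27b²)·( 3s⁴ + 6as²t² + 12bst³ − a²t⁴ )³. Equivalently, with Δ(x,y) := 16(−4x³−27y²), the discriminant of the new curve satisfies 27·Δ(A(a,b,s,t), B(a,b,s,t)) = Δ(a,b)·(3s⁴ + 6as²t² + 12bst³ − a²t⁴)³, so the discriminant locus of the family X(s,t) is cut out by the quartic 3s⁴ + 6as²t² + 12bst³ − a²t⁴. -/

import Mathlib

open MvPolynomial

noncomputable section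

/-- The new coefficient `A(a,b,s,t)`, in any commutative `ℚ`-algebra. -/
def Acoef {R : Type*} [CommRing R] [Algebra ℚ R] (a b s t : R) : R :=
  algebraMap ℚ R (1 / 3) *
    (3 * a * s ^ 4 + 18 * b * s ^ 3 * t - 6 * a ^ 2 * s ^ 2 * t ^ 2 - 6 * a * b * s * t ^ 3
      - (a ^ 3 + 9 * b ^ 2) * t ^ 4)

/-- The new coefficient `B(a,b,s,t)`, in any commutative `ℚ`-algebra. -/
def Bcoef {R : Type*} [CommRing R] [Algebra ℚ R] (a b s t : R) : R :=
  algebraMap ℚ R (1 / 9) *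
    (9 * b * s ^ 6 - 12 * a ^ 2 * s ^ 5 * t - 45 * a * b * s ^ 4 * t ^ 2
      - 90 * b ^ 2 * s ^ 3 * t ^ 3 + 15 * a ^ 2 * b * s ^ 2 * t ^ 4
      - 2 * a * (2 * a ^ 3 + 9 * b ^ 2) * s * t ^ 5 - 3 * b * (a ^ 3 + 6 * b ^ 2) * t ^ 6)

/-- The indeterminates `a, b, s, t` of `ℚ[a,b,s,t]`. -/
abbrev a : MvPolynomial (Fin 4) ℚ := X 0
abbrev b : MvPolynomial (Fin 4) ℚ := X 1
abbrev s : MvPolynomial (Fin 4) ℚ := X 2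
abbrev t : MvPolynomial (Fin 4) ℚ := X 3

theorem discriminant_Acoef_Bcoef {R : Type*} [CommRing R] [Algebra ℚ R] (a b s t : R) :
    27 * (4 * Acoef a b s t ^ 3 + 27 * Bcoef a b s t ^ 2) =
      (4 * a ^ 3 + 27 * b ^ 2) *
        (3 * s ^ 4 + 6 * a * s ^ 2 * t ^ 2 + 12 * b * s * t ^ 3 - a ^ 2 * t ^ 4) ^ 3 := by
  have third : algebraMap ℚ R (1 / 3) ^ 3 * 27 = 1 := by
    rw [← map_pow, ← map_ofNat (algebraMap ℚ R) 27, ← map_mul]; norm_num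
  have ninth : algebraMap ℚ R (1 / 9) ^ 2 * 81 = 1 := by
    rw [← map_pow, ← map_ofNat (algebraMap ℚ R) 81, ← map_mul]; norm_num
  set P := 3 * a * s ^ 4 + 18 * b * s ^ 3 * t - 6 * a ^ 2 * s ^ 2 * t ^ 2
    - 6 * a * b * s * t ^ 3 - (a ^ 3 + 9 * b ^ 2) * t ^ 4
  set Q := 9 * b * s ^ 6 - 12 * a ^ 2 * s ^ 5 * t - 45 * a * b * s ^ 4 * t ^ 2
    - 90 * b ^ 2 * s ^ 3 * t ^ 3 + 15 * a ^ 2 * b * s ^ 2 * t ^ 4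
    - 2 * a * (2 * a ^ 3 + 9 * b ^ 2) * s * t ^ 5 - 3 * b * (a ^ 3 + 6 * b ^ 2) * t ^ 6
  -- `27 = 3³` and `27 · 27 = 9 · 9²`, so the scalars `1/3`, `1/9` cancel and leave an identity over `ℤ`.
  have cleared : 4 * P ^ 3 + 9 * Q ^ 2 = (4 * a ^ 3 + 27 * b ^ 2) *
      (3 * s ^ 4 + 6 * a * s ^ 2 * t ^ 2 + 12 * b * s * t ^ 3 - a ^ 2 * t ^ 4) ^ 3 := by
    simp only [P, Q]; ring
  unfold Acoef Bcoef
  linear_combination cleared + 4 * P ^ 3 * third + 9 * Q ^ 2 * ninth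

/-- in `ℚ[a,b,s,t]` one has
`27·(4·A(a,b,s,t)³ + 27·B(a,b,s,t)²) = (4a³ + 27b²)·(3s⁴ + 6as²t² + 12bst³ − a²t⁴)³`. -/
theorem stmt_8 :
    27 * (4 * Acoef a b s t ^ 3 + 27 * Bcoef a b s t ^ 2) =
      (4 * a ^ 3 + 27 * b ^ 2) *
        (3 * s ^ 4 + 6 * a * s ^ 2 * t ^ 2 + 12 * b * s * t ^ 3 - a ^ 2 * t ^ 4) ^ 3 :=
  discriminant_Acoef_Bcoef a b s t

end
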